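/- arXiv:1501.05296 — 2 statements merged into one kernel-verified Lean document; each statement's English description precedes it below -/
import Mathlib

section
/- Let F be a polynomial over a commutative ring and p a positive integer. If p is a good difference-prime for supp(F) (no two distinct exponents of F are congruent modulo p), then F mod (x^p − 1) has exactly as many nonzero terms as F, and its coefficients are a permutation of the coefficients of F. -/
open Polynomial

namespace Polynomial

variable {R ι : Type*} [Semiring R] {s : Finset ι} {c : ι → R} {g : ι → ℕ}

theorem coeff_finsetSum_C_mul_X_pow (s : Finset ι) (c : ι → R) (g : ι → ℕ) (k : ℕ) :
    (∑ i ∈ s, C (c i) * X ^ g i).coeff k = ∑ i ∈ s with g i = k, c i := by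
  simp only [finsetSum_coeff, coeff_C_mul_X_pow, Finset.sum_filter, eq_comm]

theorem coeff_finsetSum_C_mul_X_pow_of_injOn (hg : Set.InjOn g s) {i : ι} (hi : i ∈ s) :
    (∑ j ∈ s, C (c j) * X ^ g j).coeff (g i) = c i := by
  rw [coeff_finsetSum_C_mul_X_pow, Finset.sum_eq_single_of_mem i (by simp [hi])]
  intro j hj hji
  rw [Finset.mem_filter] at hj
  exact absurd (hg hj.1 hi hj.2) hji

theorem support_finsetSum_C_mul_X_pow_of_injOn (hg : Set.InjOn g s) (hc : ∀ i ∈ s, c i ≠ 0) :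
    (∑ j ∈ s, C (c j) * X ^ g j).support = s.image g := by
  ext k
  rw [mem_support_iff, Finset.mem_image]
  constructor
  · intro hk
    by_contra! hnone
    apply hk
    rw [coeff_finsetSum_C_mul_X_pow, Finset.filter_false_of_mem hnone, Finset.sum_empty]
  · rintro ⟨i, hi, rfl⟩
    rw [coeff_finsetSum_C_mul_X_pow_of_injOn hg hi]
    exact hc i hi

end Polynomial

theorem reduce_mod_xp_good_prime_general {R : Type*} [CommRing R] (F : Polynomial R) (p : ℕ)
    (hgood : ∀ e ∈ F.support, ∀ e' ∈ F.support, e % p = e' % p → e = e') :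
    let Fmod := ∑ e ∈ F.support, Polynomial.C (F.coeff e) * Polynomial.X ^ (e % p)
    Fmod.support = F.support.image (· % p) ∧
    Fmod.support.card = F.support.card ∧
    ∀ e ∈ F.support, Fmod.coeff (e % p) = F.coeff e := by
  intro Fmod
  have hinj : Set.InjOn (· % p) (F.support : Set ℕ) := fun e he e' he' => hgood e he e' he'
  have hsupp : Fmod.support = F.support.image (· % p) :=
    support_finsetSum_C_mul_X_pow_of_injOn hinj fun e he => mem_support_iff.1 he
  refine ⟨hsupp, ?_, fun e he => coeff_finsetSum_C_mul_X_pow_of_injOn hinj he⟩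
  rw [hsupp, Finset.card_image_of_injOn hinj]

theorem reduce_mod_xp_good_prime {R : Type*} [CommRing R] (F : Polynomial R) (p : ℕ)
    (hp : 0 < p)
    (hgood : ∀ e ∈ F.support, ∀ e' ∈ F.support, e % p = e' % p → e = e') :
    let Fmod := ∑ e ∈ F.support, Polynomial.C (F.coeff e) * Polynomial.X ^ (e % p)
    Fmod.support = F.support.image (· % p) ∧
    Fmod.support.card = F.support.card ∧
    ∀ e ∈ F.support, Fmod.coeff (e % p) = F.coeff e :=
  reduce_mod_xp_good_prime_general F p hgood
end

section
/- Let F, G ∈ ℤ[x] and let ℓ be an integer with ℓ > max(deg(FG), ‖FG‖₁). Suppose H = F·G = Σᵢ cᵢ x^{eᵢ}, and let p be a good difference-prime for supp(H). Define H₁ = F(x)·G(x) mod (ℓ², x^p − 1) and H₂ = F((ℓ+1)x)·G((ℓ+1)x) mod (ℓ², x^p − 1). Then for each i, the coefficient of x^{eᵢ mod p} in H₁ is cᵢ mod ℓ² and in H₂ is cᵢ·(eᵢ·ℓ + 1) mod ℓ². Hence if cᵢ is invertible modulo ℓ (e.g., gcd(cᵢ, ℓ) = 1), the exponent eᵢ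 can be recovered as ((coefficient ratio) − 1)/ℓ. -/
/-!
Modulo `ℓ²` the substitution `x ↦ (ℓ + 1) x` multiplies the coefficient of `x^e` by
`(ℓ + 1)^e ≡ e ℓ + 1`. Since `p` separates the exponents of `H = F G`, folding them modulo `p`
moves the coefficients without merging any, so the coefficient of `x^(e % p)` in `H₂` is
`c (e ℓ + 1)`. If `c` is a unit modulo `ℓ`, this determines `e ℓ` modulo `ℓ²`, hence `e` modulo
`ℓ`, hence `e` itself because `0 ≤ e ≤ deg H < ℓ`.
-/

open Polynomial

theorem Int.add_one_pow_modEq_sq (ℓ : ℤ) (e : ℕ) : (ℓ + 1) ^ e ≡ e * ℓ + 1 [ZMOD ℓ ^ 2] := by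
  have h := sq_dvd_add_pow_sub_sub ℓ 1 e
  rw [one_pow, one_pow, one_mul, add_comm 1 ℓ, sub_sub, mul_comm ℓ] at h
  exact (Int.modEq_iff_dvd.mpr h).symm

theorem Int.eq_of_mul_mul_add_one_modEq_sq {c ℓ : ℤ} {a b : ℕ} (hc : IsCoprime c ℓ)
    (ha : (a : ℤ) < ℓ) (hb : (b : ℤ) < ℓ)
    (h : c * (a * ℓ + 1) ≡ c * (b * ℓ + 1) [ZMOD ℓ ^ 2]) : a = b := by
  have hℓ : ℓ ≠ 0 := by omega
  have hdvd_mul : ℓ * ℓ ∣ ((b : ℤ) - a) * ℓ := by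
    have := Int.modEq_iff_dvd.mp h
    rw [show c * (b * ℓ + 1) - c * (a * ℓ + 1) = c * ((b - a) * ℓ) by ring] at this
    simpa [sq] using (hc.symm.pow_left (m := 2)).dvd_of_dvd_mul_left this
  have hdvd : ℓ ∣ (b : ℤ) - a := Int.dvd_of_mul_dvd_mul_right hℓ hdvd_mul
  have hlt : |(b : ℤ) - a| < ℓ := abs_sub_lt_iff.mpr ⟨by omega, by omega⟩
  exact_mod_cast (sub_eq_zero.mp (Int.eq_zero_of_abs_lt_dvd hdvd hlt)).symm

namespace Polynomial

variable {R : Type*} [Semiring R]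

theorem support_comp_C_mul_X_subset (Q : R[X]) (r : R) :
    (Q.comp (C r * X)).support ⊆ Q.support := by
  intro n hn
  rw [mem_support_iff, comp_C_mul_X_coeff] at hn
  exact mem_support_iff.mpr fun h => hn (by rw [h, zero_mul])

/-- The representative of `Q` modulo `X ^ p - 1` with exponents `< p` (for `p > 0`). -/
noncomputable def foldExponentsMod (p : ℕ) (Q : R[X]) : R[X] :=
  ∑ e ∈ Q.support, C (Q.coeff e) * X ^ (e % p)

theorem coeff_foldExponentsMod {p : ℕ} {Q : R[X]} {S : Set ℕ} (hS : Set.InjOn (· % p) S)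
    (hQ : ↑Q.support ⊆ S) {e : ℕ} (he : e ∈ S) :
    (foldExponentsMod p Q).coeff (e % p) = Q.coeff e := by
  rw [foldExponentsMod, finsetSum_coeff, Finset.sum_eq_single e]
  · rw [coeff_C_mul_X_pow, if_pos rfl]
  · intro e' he' hne
    rw [coeff_C_mul_X_pow, if_neg fun h => hne (hS (hQ he') he h.symm)]
  · intro he
    rw [notMem_support_iff.mp he, C_0, zero_mul, coeff_zero]

end Polynomial

theorem exponent_recovery_general (F G : Polynomial ℤ) (ℓ : ℤ) (p : ℕ)
    (hℓ : ((F * G).natDegree : ℤ) < ℓ ∧ (∑ e ∈ (F * G).support, |(F * G).coeff e|) < ℓ)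
    (hgood : ∀ e ∈ (F * G).support, ∀ e' ∈ (F * G).support, e % p = e' % p → e = e') :
    let H := F * G
    let H₁ := ∑ e ∈ H.support, Polynomial.C (H.coeff e) * Polynomial.X ^ (e % p)
    let H₂pre := (F.comp (Polynomial.C (ℓ + 1) * Polynomial.X)) *
      (G.comp (Polynomial.C (ℓ + 1) * Polynomial.X))
    let H₂ := ∑ e ∈ H₂pre.support, Polynomial.C (H₂pre.coeff e) * Polynomial.X ^ (e % p)
    (∀ e ∈ H.support,
        H₁.coeff (e % p) ≡ H.coeff e [ZMOD ℓ ^ 2] ∧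
        H₂.coeff (e % p) ≡ H.coeff e * ((e : ℤ) * ℓ + 1) [ZMOD ℓ ^ 2]) ∧
    (∀ e ∈ H.support, IsCoprime (H.coeff e) ℓ →
      ∀ e' : ℕ, (e' : ℤ) < ℓ →
        H.coeff e * ((e' : ℤ) * ℓ + 1) ≡ H₂.coeff (e % p) [ZMOD ℓ ^ 2] → e' = e) := by
  intro H H₁ H₂pre H₂
  have hinj : Set.InjOn (· % p) (H.support : Set ℕ) := hgood
  have hH₂pre : H₂pre = H.comp (C (ℓ + 1) * X) := (mul_comp F G _).symm
  have hH₂ : ∀ e ∈ H.support, H₂.coeff (e % p) ≡ H.coeff e * (e * ℓ + 1) [ZMOD ℓ ^ 2] := by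
    intro e he
    have hsupp : ↑H₂pre.support ⊆ (H.support : Set ℕ) := by
      rw [hH₂pre]; exact_mod_cast support_comp_C_mul_X_subset H _
    rw [show H₂ = foldExponentsMod p H₂pre from rfl, coeff_foldExponentsMod hinj hsupp he,
      hH₂pre, comp_C_mul_X_coeff]
    exact (Int.add_one_pow_modEq_sq ℓ e).mul_left _
  refine ⟨fun e he => ⟨?_, hH₂ e he⟩, ?_⟩
  · rw [show H₁ = foldExponentsMod p H from rfl, coeff_foldExponentsMod hinj subset_rfl he]
  · intro e he hcop e' he' hmod
    have he_lt : (e : ℤ) < ℓ :=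
      lt_of_le_of_lt (by exact_mod_cast le_natDegree_of_mem_supp e he) hℓ.1
    exact Int.eq_of_mul_mul_add_one_modEq_sq hcop he' he_lt (hmod.trans (hH₂ e he))

theorem exponent_recovery (F G : Polynomial ℤ) (ℓ : ℤ) (p : ℕ) (hp : 0 < p)
    (hℓ : ((F * G).natDegree : ℤ) < ℓ ∧ (∑ e ∈ (F * G).support, |(F * G).coeff e|) < ℓ)
    (hgood : ∀ e ∈ (F * G).support, ∀ e' ∈ (F * G).support, e % p = e' % p → e = e') :
    let H := F * G
    let H₁ := ∑ e ∈ H.support, Polynomial.C (H.coeff e) * Polynomial.X ^ (e % p)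
    let H₂pre := (F.comp (Polynomial.C (ℓ + 1) * Polynomial.X)) *
      (G.comp (Polynomial.C (ℓ + 1) * Polynomial.X))
    let H₂ := ∑ e ∈ H₂pre.support, Polynomial.C (H₂pre.coeff e) * Polynomial.X ^ (e % p)
    (∀ e ∈ H.support,
        H₁.coeff (e % p) ≡ H.coeff e [ZMOD ℓ ^ 2] ∧
        H₂.coeff (e % p) ≡ H.coeff e * ((e : ℤ) * ℓ + 1) [ZMOD ℓ ^ 2]) ∧
    (∀ e ∈ H.support, IsCoprime (H.coeff e) ℓ →
      ∀ e' : ℕ, (e' : ℤ) < ℓ →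
        H.coeff e * ((e' : ℤ) * ℓ + 1) ≡ H₂.coeff (e % p) [ZMOD ℓ ^ 2] → e' = e) :=
  exponent_recovery_general F G ℓ p hℓ hgood
end
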